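/- For 0 < μ < 1 and integer k ≥ 0, the right-sided Riemann–Liouville fractional derivative of order μ of the Jacobi poly-fractonomial of second kind satisfies D^μ_{ξ,1}[(1−ξ)^μ P_k^{μ,−μ}(ξ)] = (Γ(k+1+μ)/Γ(k+1)) · P_k(ξ) for ξ ∈ (−1,1), where P_k is the Legendre polynomial. -/

import Mathlib

open MeasureTheory

/-- Jacobi polynomial `P_n^{(a,b)}` via the explicit finite sum (DLMF 18.5.7). -/
noncomputable def jacobiP (n : ℕ) (a b : ℝ) (x : ℝ) : ℝ :=
  ∑ l ∈ Finset.range (n + 1),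
    (Real.Gamma ((n : ℝ) + a + 1) / (Real.Gamma ((l : ℝ) + a + 1) * (Nat.factorial (n - l)))) *
    (Real.Gamma ((n : ℝ) + b + 1) / (Real.Gamma (((n - l : ℕ) : ℝ) + b + 1) * (Nat.factorial l))) *
    ((x - 1) / 2) ^ l * ((x + 1) / 2) ^ (n - l)

/-- Right-sided Riemann–Liouville fractional derivative of order `μ ∈ (0,1)`
with upper terminal `L`. -/
noncomputable def rlDerivRight (μ L : ℝ) (v : ℝ → ℝ) (x : ℝ) : ℝ :=
  (-1 / Real.Gamma (1 - μ)) * deriv (fun y => ∫ s in y..L, v s / (s - y) ^ μ) x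

/-
In powers of `1 - ξ`, the coefficient of `(1 - ξ) ^ j` in `P_k^{(μ,-μ)}` is
`Γ(k+μ+1) / Γ(μ+j+1) · (-1/2)^j · C(k+j, j) / (k-j)!`: expanding `((ξ+1)/2)^(k-l)` around `ξ = 1`
turns the Gamma quotients of the defining sum into generalized binomials `C(k-μ, l) C(j+μ, j-l)`,
which Chu–Vandermonde sums to `C(k+j, j)`. A Beta integral gives
`D^μ[(1-ξ)^(μ+j)] = Γ(μ+j+1) / Γ(j+1) · (1-ξ)^j`, so the factor `Γ(μ+j+1)` cancels and what
remains is `Γ(k+μ+1) / Γ(k+1)` times the same expansion at `μ = 0`, which is that of `P_k`.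
-/

open Finset Nat

theorem Ring.succ_nsmul_choose_succ {R : Type*} [NonAssocRing R] [Pow R ℕ] [NatPowAssoc R]
    [BinomialRing R] (r : R) (n : ℕ) :
    (n + 1) • Ring.choose r (n + 1) = Ring.choose r n * (r - n) := by
  simpa [Nat.choose_succ_self_right, Ring.choose_one_right] using
    Ring.choose_smul_choose r (Nat.le_succ n)

theorem Real.Gamma_add_one_eq_factorial_mul_choose_mul {x : ℝ} {n : ℕ} (h : (n : ℝ) < x + 1) :
    Real.Gamma (x + 1) = n ! * Ring.choose x n * Real.Gamma (x - n + 1) := by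
  induction n with
  | zero => simp
  | succ n ih =>
    push_cast at h ⊢
    have hxn : 0 < x - n := by linarith
    have hchoose := Ring.succ_nsmul_choose_succ x n
    rw [nsmul_eq_mul, Nat.cast_add_one] at hchoose
    rw [ih (by linarith), Real.Gamma_add_one hxn.ne', factorial_succ,
      show x - (n + 1) + 1 = x - n by ring]
    push_cast
    linear_combination (n ! : ℝ) * Real.Gamma (x - n) * hchoose.symm

noncomputable def jacobiCoeff (n : ℕ) (a b : ℝ) (l : ℕ) : ℝ :=
  (Real.Gamma ((n : ℝ) + a + 1) / (Real.Gamma ((l : ℝ) + a + 1) * (Nat.factorial (n - l)))) *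
    (Real.Gamma ((n : ℝ) + b + 1) / (Real.Gamma (((n - l : ℕ) : ℝ) + b + 1) * (Nat.factorial l)))

theorem jacobiP_eq_sum_sub_one_div_two_pow (n : ℕ) (a b x : ℝ) :
    jacobiP n a b x = ∑ j ∈ range (n + 1),
      (∑ l ∈ range (j + 1), jacobiCoeff n a b l * (n - l).choose (j - l)) * ((x - 1) / 2) ^ j := by
  calc jacobiP n a b x
      = ∑ l ∈ range (n + 1), ∑ j ∈ Ico l (n + 1),
          jacobiCoeff n a b l * (n - l).choose (j - l) * ((x - 1) / 2) ^ j := by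
        refine sum_congr rfl fun l hl => ?_
        rw [sum_Ico_eq_sum_range, show n + 1 - l = (n - l) + 1 by grind,
          show (x + 1) / 2 = (x - 1) / 2 + 1 by ring, add_pow, mul_sum]
        refine sum_congr rfl fun m _ => ?_
        rw [Nat.add_sub_cancel_left, one_pow, pow_add, jacobiCoeff]
        ring
    _ = _ := by
        rw [sum_comm' (t' := range (n + 1)) (s' := fun j => range (j + 1))]
        · simp only [sum_mul]
        · intro l j
          simp only [mem_range, mem_Ico]
          omega

theorem jacobiCoeff_neg_mul_choose {k l j : ℕ} {a : ℝ} (ha : -1 < a) (ha' : a < 1)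
    (hlj : l ≤ j) (hjk : j ≤ k) :
    jacobiCoeff k a (-a) l * (k - l).choose (j - l)
      = Real.Gamma (k + a + 1) / (Real.Gamma (a + j + 1) * (k - j)!)
        * (Ring.choose ((k : ℝ) - a) l * Ring.choose ((j : ℝ) + a) (j - l)) := by
  have hl : (l : ℝ) ≤ j := by exact_mod_cast hlj
  have hj : (j : ℝ) ≤ k := by exact_mod_cast hjk
  have hGamma_k : Real.Gamma (k + -a + 1)
      = l ! * Ring.choose ((k : ℝ) - a) l * Real.Gamma (((k - l : ℕ) : ℝ) + -a + 1) := by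
    rw [Nat.cast_sub (hlj.trans hjk), show (k : ℝ) + -a + 1 = (k - a) + 1 by ring,
      show (k : ℝ) - l + -a + 1 = (k - a) - l + 1 by ring]
    exact Real.Gamma_add_one_eq_factorial_mul_choose_mul (by linarith)
  have hGamma_j : Real.Gamma (a + j + 1)
      = (j - l)! * Ring.choose ((j : ℝ) + a) (j - l) * Real.Gamma (l + a + 1) := by
    have h := Real.Gamma_add_one_eq_factorial_mul_choose_mul (x := (j : ℝ) + a) (n := j - l)
      (by rw [Nat.cast_sub hlj]; linarith)
    rwa [Nat.cast_sub hlj, show (j : ℝ) + a - (j - l) + 1 = l + a + 1 by ring,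
      show (j : ℝ) + a + 1 = a + j + 1 by ring] at h
  have hchoose : ((k - l).choose (j - l) : ℝ) = (k - l)! / ((j - l)! * (k - j)!) := by
    rw [Nat.cast_choose ℝ (by omega : j - l ≤ k - l), show k - l - (j - l) = k - j by omega]
  have hpos_l : 0 < Real.Gamma (l + a + 1) := Real.Gamma_pos_of_pos (by linarith)
  have hpos_kl : 0 < Real.Gamma (((k - l : ℕ) : ℝ) + -a + 1) :=
    Real.Gamma_pos_of_pos (by have := (k - l : ℕ).cast_nonneg (α := ℝ); linarith)
  have hchoose_ne : Ring.choose ((j : ℝ) + a) (j - l) ≠ 0 := by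
    intro h
    rw [h, mul_zero, zero_mul] at hGamma_j
    exact (Real.Gamma_pos_of_pos (by linarith)).ne' hGamma_j
  rw [jacobiCoeff, hGamma_k, hGamma_j, hchoose]
  field_simp

theorem sum_jacobiCoeff_neg_mul_choose {k j : ℕ} {a : ℝ} (ha : -1 < a) (ha' : a < 1)
    (hjk : j ≤ k) :
    ∑ l ∈ range (j + 1), jacobiCoeff k a (-a) l * (k - l).choose (j - l)
      = Real.Gamma (k + a + 1) / (Real.Gamma (a + j + 1) * (k - j)!) * (k + j).choose j := by
  rw [sum_congr rfl fun l hl => jacobiCoeff_neg_mul_choose ha ha' (by grind) hjk, ← mul_sum,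
    ← Nat.sum_antidiagonal_eq_sum_range_succ
      (fun i i' => Ring.choose ((k : ℝ) - a) i * Ring.choose ((j : ℝ) + a) i'),
    ← Ring.add_choose_eq _ (Commute.all _ _), show (k : ℝ) - a + (j + a) = ((k + j : ℕ) : ℝ) by
      push_cast; ring, Ring.choose_natCast]

theorem jacobiP_neg_eq_sum {a : ℝ} (ha : -1 < a) (ha' : a < 1) (k : ℕ) (x : ℝ) :
    jacobiP k a (-a) x = ∑ j ∈ range (k + 1), Real.Gamma (k + a + 1) / Real.Gamma (a + j + 1)
      * ((-1 / 2) ^ j * (k + j).choose j / (k - j)!) * (1 - x) ^ j := by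
  rw [jacobiP_eq_sum_sub_one_div_two_pow]
  refine sum_congr rfl fun j hj => ?_
  rw [sum_jacobiCoeff_neg_mul_choose ha ha' (by grind), show (x - 1) / 2 = -1 / 2 * (1 - x) by ring,
    mul_pow]
  ring

theorem integral_rpow_mul_one_sub_rpow {a b : ℝ} (ha : 0 < a) (hb : 0 < b) :
    ∫ t in (0 : ℝ)..1, t ^ (a - 1) * (1 - t) ^ (b - 1)
      = Real.Gamma a * Real.Gamma b / Real.Gamma (a + b) := by
  have hbeta : Complex.betaIntegral a b
      = ((∫ t in (0 : ℝ)..1, t ^ (a - 1) * (1 - t) ^ (b - 1) : ℝ) : ℂ) := by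
    rw [Complex.betaIntegral, ← intervalIntegral.integral_ofReal]
    refine intervalIntegral.integral_congr fun t ht => ?_
    rw [Set.uIcc_of_le zero_le_one] at ht
    push_cast
    rw [Complex.ofReal_cpow ht.1, Complex.ofReal_cpow (by linarith [ht.2])]
    push_cast
    ring
  have h := Complex.Gamma_mul_Gamma_eq_betaIntegral (s := a) (t := b) (by simpa) (by simpa)
  rw [hbeta, ← Complex.ofReal_add, Complex.Gamma_ofReal, Complex.Gamma_ofReal,
    Complex.Gamma_ofReal] at h
  have hpos : 0 < Real.Gamma (a + b) := Real.Gamma_pos_of_pos (by linarith)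
  rw [eq_div_iff hpos.ne', mul_comm]
  exact_mod_cast h.symm

theorem integral_one_sub_rpow_div_sub_rpow {p μ ξ : ℝ} (hp : -1 < p) (hμ : μ < 1) (hξ : ξ < 1) :
    ∫ s in ξ..1, (1 - s) ^ p / (s - ξ) ^ μ
      = Real.Gamma (1 - μ) * Real.Gamma (p + 1) / Real.Gamma (p + 2 - μ)
        * (1 - ξ) ^ (p + 1 - μ) := by
  have hc : 0 < 1 - ξ := by linarith
  have hsubst := intervalIntegral.integral_comp_mul_add
    (fun s => (1 - s) ^ p / (s - ξ) ^ μ) hc.ne' ξ (a := 0) (b := 1)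
  rw [mul_zero, zero_add, mul_one, sub_add_cancel, smul_eq_mul] at hsubst
  have hintegrand : ∀ t ∈ Set.uIcc (0 : ℝ) 1,
      (1 - ((1 - ξ) * t + ξ)) ^ p / ((1 - ξ) * t + ξ - ξ) ^ μ
      = (1 - ξ) ^ (p - μ) * (t ^ ((1 - μ) - 1) * (1 - t) ^ ((p + 1) - 1)) := by
    intro t ht
    rw [Set.uIcc_of_le zero_le_one] at ht
    rw [show 1 - ((1 - ξ) * t + ξ) = (1 - ξ) * (1 - t) by ring,
      show (1 - ξ) * t + ξ - ξ = (1 - ξ) * t by ring, Real.mul_rpow hc.le (by linarith [ht.2]),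
      Real.mul_rpow hc.le ht.1, Real.rpow_sub hc, show 1 - μ - 1 = -μ by ring, add_sub_cancel_right,
      Real.rpow_neg ht.1]
    field_simp
  rw [intervalIntegral.integral_congr hintegrand, intervalIntegral.integral_const_mul,
    integral_rpow_mul_one_sub_rpow (by linarith) (by linarith),
    show 1 - μ + (p + 1) = p + 2 - μ by ring] at hsubst
  rw [← mul_inv_cancel_left₀ hc.ne' (∫ s in ξ..1, (1 - s) ^ p / (s - ξ) ^ μ), ← hsubst,
    show p + 1 - μ = (p - μ) + 1 by ring, Real.rpow_add_one hc.ne']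
  ring

theorem intervalIntegrable_one_sub_rpow_div_sub_rpow {p μ y : ℝ} (hp : 0 ≤ p) (hμ : μ < 1)
    (hy : y ≤ 1) : IntervalIntegrable (fun s => (1 - s) ^ p / (s - y) ^ μ) volume y 1 := by
  have hsingular : IntervalIntegrable (fun s => (s - y) ^ (-μ)) volume y 1 := by
    simpa using (intervalIntegral.intervalIntegrable_rpow' (r := -μ) (by linarith)
      (a := 0) (b := 1 - y)).comp_sub_right y
  have hcont : ContinuousOn (fun s : ℝ => (1 - s) ^ p) (Set.uIcc y 1) :=
    ((continuous_const.sub continuous_id).continuousOn).rpow_const fun _ _ => Or.inr hp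
  refine (hsingular.mul_continuousOn hcont).congr fun s hs => ?_
  rw [Set.uIoc_of_le hy] at hs
  rw [Real.rpow_neg (by linarith [hs.1]), div_eq_mul_inv, mul_comm]

theorem integral_one_sub_rpow_mul_sum_div_sub_rpow {μ y : ℝ} (hμ0 : 0 < μ) (hμ1 : μ < 1)
    (hy : y < 1) (c : ℕ → ℝ) (n : ℕ) :
    ∫ s in y..1, (1 - s) ^ μ * (∑ j ∈ range n, c j * (1 - s) ^ j) / (s - y) ^ μ
      = Real.Gamma (1 - μ) * ∑ j ∈ range n,
          c j * (Real.Gamma (μ + j + 1) / Real.Gamma (j + 2)) * (1 - y) ^ (j + 1) := by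
  have hintegrand : ∀ s ∈ Set.uIcc y 1,
      (1 - s) ^ μ * (∑ j ∈ range n, c j * (1 - s) ^ j) / (s - y) ^ μ
        = ∑ j ∈ range n, c j * ((1 - s) ^ (μ + j) / (s - y) ^ μ) := by
    intro s hs
    rw [Set.uIcc_of_le hy.le] at hs
    rw [mul_sum, sum_div]
    refine sum_congr rfl fun j _ => ?_
    rw [Real.rpow_add' (by linarith [hs.2]) (by positivity), Real.rpow_natCast]
    ring
  rw [intervalIntegral.integral_congr hintegrand, intervalIntegral.integral_finsetSum
    fun j _ => (intervalIntegrable_one_sub_rpow_div_sub_rpow (by positivity) hμ1 hy.le).const_mul _,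
    mul_sum]
  refine sum_congr rfl fun j _ => ?_
  rw [intervalIntegral.integral_const_mul, integral_one_sub_rpow_div_sub_rpow (by linarith) hμ1 hy,
    show μ + j + 2 - μ = j + 2 by ring, show μ + j + 1 - μ = ((j + 1 : ℕ) : ℝ) by push_cast; ring,
    Real.rpow_natCast]
  ring

theorem rlDerivRight_one_sub_rpow_mul_sum {μ ξ : ℝ} (hμ0 : 0 < μ) (hμ1 : μ < 1) (hξ : ξ < 1)
    (c : ℕ → ℝ) (n : ℕ) :
    rlDerivRight μ 1 (fun s => (1 - s) ^ μ * ∑ j ∈ range n, c j * (1 - s) ^ j) ξ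
      = ∑ j ∈ range n, c j * (Real.Gamma (μ + j + 1) / Real.Gamma (j + 1)) * (1 - ξ) ^ j := by
  have hlocal :
      (fun y => ∫ s in y..1, (1 - s) ^ μ * (∑ j ∈ range n, c j * (1 - s) ^ j) / (s - y) ^ μ)
      =ᶠ[nhds ξ] fun y => Real.Gamma (1 - μ) * ∑ j ∈ range n,
          c j * (Real.Gamma (μ + j + 1) / Real.Gamma (j + 2)) * (1 - y) ^ (j + 1) :=
    Filter.eventually_of_mem (Iio_mem_nhds hξ) fun y hy =>
      integral_one_sub_rpow_mul_sum_div_sub_rpow hμ0 hμ1 hy c n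
  have hderiv : HasDerivAt (fun y => Real.Gamma (1 - μ) * ∑ j ∈ range n,
        c j * (Real.Gamma (μ + j + 1) / Real.Gamma (j + 2)) * (1 - y) ^ (j + 1))
      (Real.Gamma (1 - μ) * ∑ j ∈ range n,
        c j * (Real.Gamma (μ + j + 1) / Real.Gamma (j + 2)) * ((j + 1) * (1 - ξ) ^ j * -1)) ξ := by
    refine (HasDerivAt.fun_sum fun j _ => ?_).const_mul _
    simpa using (((hasDerivAt_id ξ).const_sub 1).pow (j + 1)).const_mul
      (c j * (Real.Gamma (μ + j + 1) / Real.Gamma (j + 2)))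
  rw [rlDerivRight, hlocal.deriv_eq, hderiv.deriv, mul_sum, mul_sum]
  refine sum_congr rfl fun j _ => ?_
  have hGamma : Real.Gamma (j + 2) = (j + 1) * Real.Gamma (j + 1) := by
    rw [show (j : ℝ) + 2 = (j + 1) + 1 by ring, Real.Gamma_add_one (by positivity)]
  have hpos_μ : 0 < Real.Gamma (1 - μ) := Real.Gamma_pos_of_pos (by linarith)
  have hpos_j : 0 < Real.Gamma (j + 1) := Real.Gamma_pos_of_pos (by positivity)
  rw [hGamma]
  field_simp

theorem stmt1 (μ : ℝ) (hμ0 : 0 < μ) (hμ1 : μ < 1) (k : ℕ) :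
    ∀ ξ ∈ Set.Ioo (-1 : ℝ) 1,
      rlDerivRight μ 1 (fun s => (1 - s) ^ μ * jacobiP k μ (-μ) s) ξ
        = (Real.Gamma ((k : ℝ) + 1 + μ) / Real.Gamma ((k : ℝ) + 1)) * jacobiP k 0 0 ξ := by
  intro ξ hξ
  have hLegendre := jacobiP_neg_eq_sum (a := 0) (by norm_num) (by norm_num) k ξ
  rw [neg_zero] at hLegendre
  simp_rw [jacobiP_neg_eq_sum (by linarith : -1 < μ) hμ1 k]
  rw [rlDerivRight_one_sub_rpow_mul_sum hμ0 hμ1 hξ.2, hLegendre, mul_sum]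
  refine sum_congr rfl fun j _ => ?_
  have hpos_j : 0 < Real.Gamma (μ + j + 1) := Real.Gamma_pos_of_pos (by positivity)
  have hpos_k : 0 < Real.Gamma (k + 1) := Real.Gamma_pos_of_pos (by positivity)
  rw [add_zero, zero_add, add_right_comm]
  field_simp
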